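/- arXiv:1808.02806 — 4 statements merged into one kernel-verified Lean document; each statement's English description precedes it below -/
import Mathlib

section
/- (Hölder inequality, Banach algebra version) Let X be a Banach algebra, 1 < p < ∞, 1/p + 1/q = 1, and ν : 𝒜 → Y a σ-additive vector measure. If f ∈ L^p_w(ν, X, Y) and g ∈ L^q_w(ν, X, Y), then sup_{‖y'‖≤1} ∫_Ω ‖f(w)·g(w)‖_X d|y'∘ν|(w) ≤ ‖f‖_{L^p_w(ν,X,Y)} · ‖g‖_{L^q_w(ν,X,Y)}, where f(w)·g(w) denotes multiplication in the algebra X. -/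
/-! For each `y'` in the unit ball of `Y'`, submultiplicativity of the norm and the scalar Hölder
inequality for `|y' ∘ ν|` bound `∫ ‖f g‖ d|y' ∘ ν|`; each of the two factors is at most the
corresponding `L^p_w` norm, a supremum over the same ball. -/

open MeasureTheory ENNReal

variable {Ω X Y : Type*}

/-- The total variation measure of the scalar measure `y' ∘ ν`. -/
noncomputable def scalarVar [MeasurableSpace Ω] [NormedAddCommGroup Y] [NormedSpace ℝ Y]
    (ν : VectorMeasure Ω Y) (y' : Y →L[ℝ] ℝ) : Measure Ω :=
  SignedMeasure.totalVariation (VectorMeasure.mapRange ν (y' : Y →ₗ[ℝ] ℝ).toAddMonoidHom y'.continuous)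

/-- The `L^p_w(ν, X, Y)` norm. -/
noncomputable def lpwNorm [MeasurableSpace Ω] [NormedAddCommGroup X] [NormedAddCommGroup Y]
    [NormedSpace ℝ Y] (ν : VectorMeasure Ω Y) (p : ℝ) (f : Ω → X) : ℝ≥0∞ :=
  ⨆ y' ∈ {y' : Y →L[ℝ] ℝ | ‖y'‖ ≤ 1},
    (∫⁻ ω, (‖f ω‖₊ : ℝ≥0∞) ^ p ∂ scalarVar ν y') ^ (1 / p)

/-- Membership in `L^p_w(ν, X, Y)`. -/
def MemLpw [MeasurableSpace Ω] [NormedAddCommGroup X] [NormedAddCommGroup Y]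
    [NormedSpace ℝ Y] (ν : VectorMeasure Ω Y) (p : ℝ) (f : Ω → X) : Prop :=
  StronglyMeasurable f ∧
    ∀ y' : Y →L[ℝ] ℝ, (∫⁻ ω, (‖f ω‖₊ : ℝ≥0∞) ^ p ∂ scalarVar ν y') < ∞

/-- The semivariation of the vector measure `ν`. -/
noncomputable def semivar [MeasurableSpace Ω] [NormedAddCommGroup Y] [NormedSpace ℝ Y]
    (ν : VectorMeasure Ω Y) (E : Set Ω) : ℝ≥0∞ :=
  ⨆ y' ∈ {y' : Y →L[ℝ] ℝ | ‖y'‖ ≤ 1}, scalarVar ν y' E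

/-- The integral `∫_E h ds` of a real function with respect to a signed measure. -/
noncomputable def signedIntegral [MeasurableSpace Ω] (s : SignedMeasure Ω) (E : Set Ω)
    (h : Ω → ℝ) : ℝ :=
  (∫ ω in E, h ω ∂ s.toJordanDecomposition.posPart) -
    (∫ ω in E, h ω ∂ s.toJordanDecomposition.negPart)

/-- The scalar signed measure `y' ∘ ν`. -/
noncomputable def scalarSigned [MeasurableSpace Ω] [NormedAddCommGroup Y] [NormedSpace ℝ Y]
    (ν : VectorMeasure Ω Y) (y' : Y →L[ℝ] ℝ) : SignedMeasure Ω :=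
  VectorMeasure.mapRange ν (y' : Y →ₗ[ℝ] ℝ).toAddMonoidHom y'.continuous

/-- `ν`-integrability in the sense of Lewis. -/
def NuIntegrable [MeasurableSpace Ω] [NormedAddCommGroup Y] [NormedSpace ℝ Y]
    (ν : VectorMeasure Ω Y) (h : Ω → ℝ) : Prop :=
  (∀ y' : Y →L[ℝ] ℝ, Integrable h (scalarVar ν y')) ∧
    ∀ E : Set Ω, MeasurableSet E → ∃ I : Y, ∀ y' : Y →L[ℝ] ℝ,
      y' I = signedIntegral (scalarSigned ν y') E h

theorem lintegral_nnnorm_mul_le_Lp_mul_Lq {α R : Type*} [MeasurableSpace α]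
    [NonUnitalSeminormedRing R] (μ : Measure α) {p q : ℝ} (hpq : p.HolderConjugate q)
    {f g : α → R} (hf : AEStronglyMeasurable f μ) (hg : AEStronglyMeasurable g μ) :
    ∫⁻ a, (‖f a * g a‖₊ : ℝ≥0∞) ∂μ ≤
      (∫⁻ a, (‖f a‖₊ : ℝ≥0∞) ^ p ∂μ) ^ (1 / p) * (∫⁻ a, (‖g a‖₊ : ℝ≥0∞) ^ q ∂μ) ^ (1 / q) :=
  calc ∫⁻ a, (‖f a * g a‖₊ : ℝ≥0∞) ∂μ
      ≤ ∫⁻ a, (‖f a‖₊ : ℝ≥0∞) * ‖g a‖₊ ∂μ :=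
        lintegral_mono fun a ↦ ENNReal.coe_le_coe.mpr (nnnorm_mul_le (f a) (g a))
    _ ≤ _ := ENNReal.lintegral_mul_le_Lp_mul_Lq μ hpq
        hf.nnnorm.aemeasurable.coe_nnreal_ennreal hg.nnnorm.aemeasurable.coe_nnreal_ennreal

theorem le_lpwNorm [MeasurableSpace Ω] [NormedAddCommGroup X] [NormedAddCommGroup Y]
    [NormedSpace ℝ Y] (ν : VectorMeasure Ω Y) (p : ℝ) (f : Ω → X) {y' : Y →L[ℝ] ℝ}
    (hy' : ‖y'‖ ≤ 1) :
    (∫⁻ ω, (‖f ω‖₊ : ℝ≥0∞) ^ p ∂ scalarVar ν y') ^ (1 / p) ≤ lpwNorm ν p f :=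
  le_iSup₂_of_le y' hy' le_rfl

variable [MeasurableSpace Ω] [NormedRing X] [CompleteSpace X]
  [NormedAddCommGroup Y] [NormedSpace ℝ Y] [CompleteSpace Y]

theorem lpw_holder_algebra (ν : VectorMeasure Ω Y) (p q : ℝ) (hp : 1 < p)
    (hpq : 1 / p + 1 / q = 1) (f g : Ω → X) (hf : MemLpw ν p f) (hg : MemLpw ν q g) :
    (⨆ y' ∈ {y' : Y →L[ℝ] ℝ | ‖y'‖ ≤ 1},
        ∫⁻ ω, (‖f ω * g ω‖₊ : ℝ≥0∞) ∂ scalarVar ν y')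
      ≤ lpwNorm ν p f * lpwNorm ν q g := by
  have hpq' : p.HolderConjugate q :=
    Real.holderConjugate_iff.mpr ⟨hp, by simpa only [one_div] using hpq⟩
  refine iSup₂_le fun y' hy' ↦ ?_
  calc ∫⁻ ω, (‖f ω * g ω‖₊ : ℝ≥0∞) ∂ scalarVar ν y'
      ≤ _ := lintegral_nnnorm_mul_le_Lp_mul_Lq _ hpq' hf.1.aestronglyMeasurable
        hg.1.aestronglyMeasurable
    _ ≤ lpwNorm ν p f * lpwNorm ν q g :=
        mul_le_mul' (le_lpwNorm ν p f hy') (le_lpwNorm ν q g hy')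
end

section
/- L^p(ν, X, Y) is a closed subspace of L^p_w(ν, X, Y): if f ∈ L^p_w(ν, X, Y) and (f_m) is a sequence in L^p(ν, X, Y) with ‖f_m − f‖_{L^p_w(ν,X,Y)} → 0, then f ∈ L^p(ν, X, Y), i.e., ‖f‖ᵖ is ν-integrable. -/
open MeasureTheory ENNReal

variable {Ω X Y : Type*}

/-!
Put `I m = ∫_E ‖F m‖ᵖ dν`. Integrating the elementary inequality
`|aᵖ - bᵖ| ≤ ε bᵖ + C_ε |a - b|ᵖ` against `|y' ∘ ν|` bounds `|y' (I m) - ∫_E ‖f‖ᵖ d(y' ∘ ν)|`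
by `ε ‖y'‖` for all large `m`, uniformly in `y'`. This needs
`sup_{‖y'‖ ≤ 1} ∫ ‖f‖ᵖ d|y' ∘ ν| < ∞`, which comes from the Banach–Steinhaus theorem applied to
the `ν`-integrable `‖F m‖ᵖ`. Hence `(I m)` is Cauchy in `Y`, and its limit is `∫_E ‖f‖ᵖ dν`.
-/

open Filter Topology NNReal

namespace Real

lemma add_rpow_le_rpow_mul_add_rpow_mul {p δ x y : ℝ} (hp : 0 ≤ p) (hδ : 0 < δ) (hx : 0 ≤ x)
    (hy : 0 ≤ y) : (x + y) ^ p ≤ (1 + δ) ^ p * x ^ p + (1 + 1 / δ) ^ p * y ^ p := by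
  rw [← mul_rpow (by positivity) hx, ← mul_rpow (by positivity) hy]
  -- `1 / (1 + δ) + 1 / (1 + 1 / δ) = 1`, so `x + y` is at most the larger of the two weighted terms
  have hmax : x + y ≤ max ((1 + δ) * x) ((1 + 1 / δ) * y) := by
    rcases le_or_gt y (δ * x) with h | h
    · exact le_max_of_le_left (by nlinarith)
    · refine le_max_of_le_right ?_
      have : x ≤ y / δ := by rw [le_div_iff₀ hδ]; linarith
      have : (1 + 1 / δ) * y = y / δ + y := by field_simp; ring
      linarith
  calc (x + y) ^ p ≤ (max ((1 + δ) * x) ((1 + 1 / δ) * y)) ^ p :=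
        rpow_le_rpow (by positivity) hmax hp
    _ ≤ _ := by
        rcases max_choice ((1 + δ) * x) ((1 + 1 / δ) * y) with h | h <;> rw [h]
        · linarith [rpow_nonneg (by positivity : 0 ≤ (1 + 1 / δ) * y) p]
        · linarith [rpow_nonneg (by positivity : 0 ≤ (1 + δ) * x) p]

lemma abs_rpow_sub_rpow_le {p δ a b : ℝ} (hp : 0 ≤ p) (hδ : 0 < δ) (ha : 0 ≤ a) (hb : 0 ≤ b) :
    |a ^ p - b ^ p| ≤
      ((1 + δ) ^ (2 * p) - 1) * b ^ p + ((1 + δ) * (1 + 1 / δ)) ^ p * |a - b| ^ p := by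
  have hd : 0 ≤ |a - b| := abs_nonneg _
  have h₁ : a ^ p ≤ (1 + δ) ^ p * b ^ p + (1 + 1 / δ) ^ p * |a - b| ^ p :=
    (rpow_le_rpow ha (by linarith [le_abs_self (a - b)]) hp).trans
      (add_rpow_le_rpow_mul_add_rpow_mul hp hδ hb hd)
  have h₂ : b ^ p ≤ (1 + δ) ^ p * a ^ p + (1 + 1 / δ) ^ p * |a - b| ^ p :=
    (rpow_le_rpow hb (by linarith [neg_abs_le (a - b)]) hp).trans
      (add_rpow_le_rpow_mul_add_rpow_mul hp hδ ha hd)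
  rw [mul_rpow (by positivity) (by positivity), mul_comm 2 p, rpow_mul (by positivity),
    rpow_two, abs_sub_le_iff]
  have hA : 1 ≤ (1 + δ) ^ p := one_le_rpow (by linarith) hp
  have : 0 ≤ (1 + 1 / δ) ^ p * |a - b| ^ p := by positivity
  have : 0 ≤ b ^ p := rpow_nonneg hb p
  constructor <;> nlinarith [rpow_nonneg ha p]

lemma exists_abs_rpow_sub_rpow_le {p ε : ℝ} (hp : 0 ≤ p) (hε : 0 < ε) :
    ∃ C, 0 ≤ C ∧ ∀ a b : ℝ, 0 ≤ a → 0 ≤ b → |a ^ p - b ^ p| ≤ ε * b ^ p + C * |a - b| ^ p := by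
  have hlim : Tendsto (fun δ : ℝ => (1 + δ) ^ (2 * p)) (𝓝[>] 0) (𝓝 1) := by
    have hc : Continuous fun δ : ℝ => (1 + δ) ^ (2 * p) :=
      (continuous_const.add continuous_id).rpow_const fun _ => Or.inr (by positivity)
    simpa using (hc.tendsto 0).mono_left nhdsWithin_le_nhds
  obtain ⟨δ, hδε, hδ⟩ := ((hlim.eventually (gt_mem_nhds (lt_add_of_pos_right 1 hε))).and
    self_mem_nhdsWithin).exists
  refine ⟨((1 + δ) * (1 + 1 / δ)) ^ p, by positivity, fun a b ha hb => ?_⟩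
  refine (abs_rpow_sub_rpow_le hp hδ ha hb).trans (add_le_add ?_ le_rfl)
  exact mul_le_mul_of_nonneg_right (by linarith) (rpow_nonneg hb p)

end Real

theorem exists_forall_apply_eq_of_uniform_approx {E : Type*} [NormedAddCommGroup E]
    [NormedSpace ℝ E] [CompleteSpace E] (I : ℕ → E) (S : StrongDual ℝ E → ℝ)
    (h : ∀ ε > 0, ∀ᶠ m in atTop, ∀ φ : StrongDual ℝ E, |φ (I m) - S φ| ≤ ε * ‖φ‖) :
    ∃ z, ∀ φ : StrongDual ℝ E, φ z = S φ := by
  have hcauchy : CauchySeq I := by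
    refine Metric.cauchySeq_iff'.2 fun ε hε => ?_
    obtain ⟨N, hN⟩ := eventually_atTop.1 (h (ε / 4) (by positivity))
    refine ⟨N, fun n hn => ?_⟩
    rw [dist_eq_norm]
    refine (NormedSpace.norm_le_dual_bound ℝ _ (by positivity : 0 ≤ ε / 2) fun φ => ?_).trans_lt
      (half_lt_self hε)
    rw [map_sub, Real.norm_eq_abs]
    calc |φ (I n) - φ (I N)| ≤ |φ (I n) - S φ| + |φ (I N) - S φ| := by
          rw [abs_sub_comm (φ (I N))]; exact abs_sub_le _ _ _
      _ ≤ ε / 4 * ‖φ‖ + ε / 4 * ‖φ‖ := add_le_add (hN n hn φ) (hN N le_rfl φ)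
      _ = ε / 2 * ‖φ‖ := by ring
  obtain ⟨z, hz⟩ := cauchySeq_tendsto_of_complete hcauchy
  refine ⟨z, fun φ => tendsto_nhds_unique ((φ.continuous.tendsto z).comp hz) ?_⟩
  refine Metric.tendsto_atTop.2 fun ε hε => eventually_atTop.1 ?_
  filter_upwards [h (ε / (‖φ‖ + 1)) (by positivity)] with m hm
  rw [Real.dist_eq]
  calc |φ (I m) - S φ| ≤ ε / (‖φ‖ + 1) * ‖φ‖ := hm φ
    _ < ε := by rw [div_mul_eq_mul_div, div_lt_iff₀ (by positivity)]; nlinarith [norm_nonneg φ]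

namespace MeasureTheory

lemma MemLp.integrable_norm_rpow_ofReal {α E : Type*} [MeasurableSpace α] [NormedAddCommGroup E]
    {μ : Measure α} {p : ℝ} {g : α → E} (hp : 0 < p) (hg : MemLp g (.ofReal p) μ) :
    Integrable (fun ω => ‖g ω‖ ^ p) μ := by
  simpa [hp.le] using hg.integrable_norm_rpow (by simpa using hp) ofReal_ne_top

namespace SignedMeasure

variable [MeasurableSpace Ω]

lemma totalVariation_smul (r : ℝ≥0) (s : SignedMeasure Ω) :
    (r • s).totalVariation = r • s.totalVariation := by
  simp [totalVariation, toJordanDecomposition_smul, smul_add]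

lemma abs_signedIntegral_le (s : SignedMeasure Ω) (E : Set Ω) {h : Ω → ℝ}
    (hh : Integrable h s.totalVariation) :
    |signedIntegral s E h| ≤ ∫ ω, |h ω| ∂s.totalVariation := by
  have hpos := hh.left_of_add_measure
  have hneg := hh.right_of_add_measure
  calc |signedIntegral s E h|
      ≤ |∫ ω in E, h ω ∂s.toJordanDecomposition.posPart| +
          |∫ ω in E, h ω ∂s.toJordanDecomposition.negPart| := abs_sub _ _
    _ ≤ (∫ ω in E, |h ω| ∂s.toJordanDecomposition.posPart) +
          ∫ ω in E, |h ω| ∂s.toJordanDecomposition.negPart :=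
        add_le_add abs_integral_le_integral_abs abs_integral_le_integral_abs
    _ = ∫ ω in E, |h ω| ∂s.totalVariation := by
        rw [totalVariation, Measure.restrict_add, integral_add_measure hpos.abs.restrict
          hneg.abs.restrict]
    _ ≤ ∫ ω, |h ω| ∂s.totalVariation :=
        setIntegral_le_integral hh.abs (ae_of_all _ fun ω => abs_nonneg _)

lemma signedIntegral_sub (s : SignedMeasure Ω) (E : Set Ω) {h₁ h₂ : Ω → ℝ}
    (hh₁ : Integrable h₁ s.totalVariation) (hh₂ : Integrable h₂ s.totalVariation) :
    signedIntegral s E (fun ω => h₁ ω - h₂ ω) = signedIntegral s E h₁ - signedIntegral s E h₂ := by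
  rw [signedIntegral, integral_sub hh₁.left_of_add_measure.restrict
    hh₂.left_of_add_measure.restrict, integral_sub hh₁.right_of_add_measure.restrict
    hh₂.right_of_add_measure.restrict, signedIntegral, signedIntegral]
  ring

lemma exists_integral_totalVariation_eq (s : SignedMeasure Ω) {h : Ω → ℝ}
    (hh : Integrable h s.totalVariation) :
    ∃ E₁ E₂ : Set Ω, MeasurableSet E₁ ∧ MeasurableSet E₂ ∧
      ∫ ω, h ω ∂s.totalVariation = signedIntegral s E₁ h - signedIntegral s E₂ h := by
  obtain ⟨S, hS, hpos, hneg⟩ := s.toJordanDecomposition.mutuallySingular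
  have hposS := integral_add_compl hS hh.left_of_add_measure
  have hnegS := integral_add_compl hS hh.right_of_add_measure
  rw [Measure.restrict_eq_zero.2 hpos, integral_zero_measure, zero_add] at hposS
  rw [Measure.restrict_eq_zero.2 hneg, integral_zero_measure, add_zero] at hnegS
  refine ⟨Sᶜ, S, hS.compl, hS, ?_⟩
  rw [totalVariation, integral_add_measure hh.left_of_add_measure hh.right_of_add_measure,
    signedIntegral, signedIntegral, hposS, hnegS, Measure.restrict_eq_zero.2 hpos,
    Measure.restrict_eq_zero.2 hneg, integral_zero_measure]
  ring

lemma abs_signedIntegral_norm_rpow_sub_le {E : Type*} [NormedAddCommGroup E]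
    (s : SignedMeasure Ω) (A : Set Ω) {p ε C : ℝ} (hp : 0 < p) (hC₀ : 0 ≤ C)
    (hC : ∀ a b : ℝ, 0 ≤ a → 0 ≤ b → |a ^ p - b ^ p| ≤ ε * b ^ p + C * |a - b| ^ p)
    {g₁ g₂ : Ω → E} (hg₁ : MemLp g₁ (.ofReal p) s.totalVariation)
    (hg₂ : MemLp g₂ (.ofReal p) s.totalVariation) :
    |signedIntegral s A (fun ω => ‖g₁ ω‖ ^ p) - signedIntegral s A (fun ω => ‖g₂ ω‖ ^ p)| ≤
      ε * ∫ ω, ‖g₂ ω‖ ^ p ∂s.totalVariation + C * ∫ ω, ‖g₁ ω - g₂ ω‖ ^ p ∂s.totalVariation := by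
  have i₁ := hg₁.integrable_norm_rpow_ofReal hp
  have i₂ := hg₂.integrable_norm_rpow_ofReal hp
  have i₃ : Integrable (fun ω => ‖g₁ ω - g₂ ω‖ ^ p) s.totalVariation :=
    (hg₁.sub hg₂).integrable_norm_rpow_ofReal hp
  rw [← signedIntegral_sub s A i₁ i₂, ← integral_const_mul, ← integral_const_mul,
    ← integral_add (i₂.const_mul ε) (i₃.const_mul C)]
  refine (abs_signedIntegral_le s A (i₁.sub i₂)).trans
    (integral_mono (i₁.sub i₂).abs ((i₂.const_mul ε).add (i₃.const_mul C)) fun ω => ?_)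
  refine (hC _ _ (norm_nonneg _) (norm_nonneg _)).trans (add_le_add le_rfl ?_)
  exact mul_le_mul_of_nonneg_left (Real.rpow_le_rpow (abs_nonneg _)
    (abs_norm_sub_norm_le _ _) hp.le) hC₀

end SignedMeasure

end MeasureTheory

section LpWeak

open MeasureTheory.SignedMeasure

variable [MeasurableSpace Ω] [NormedAddCommGroup X] [NormedAddCommGroup Y] [NormedSpace ℝ Y]
  {ν : VectorMeasure Ω Y} {p : ℝ}

lemma scalarVar_eq_totalVariation (ν : VectorMeasure Ω Y) (y' : Y →L[ℝ] ℝ) :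
    scalarVar ν y' = (scalarSigned ν y').totalVariation := rfl

lemma scalarVar_nnreal_smul (ν : VectorMeasure Ω Y) (c : ℝ≥0) (y' : Y →L[ℝ] ℝ) :
    scalarVar ν ((c : ℝ) • y') = c • scalarVar ν y' := by
  have : scalarSigned ν ((c : ℝ) • y') = c • scalarSigned ν y' := by
    ext E hE
    show ((c : ℝ) • y') (ν E) = c • y' (ν E)
    simp [NNReal.smul_def]
  rw [scalarVar_eq_totalVariation, this, totalVariation_smul]; rfl

lemma MemLpw.memLp {g : Ω → X} (hp : 0 < p) (hg : MemLpw ν p g) (y' : Y →L[ℝ] ℝ) :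
    MemLp g (.ofReal p) (scalarVar ν y') := by
  refine ⟨hg.1.aestronglyMeasurable, ?_⟩
  rw [eLpNorm_lt_top_iff_lintegral_rpow_enorm_lt_top (by simpa using hp) ofReal_ne_top,
    toReal_ofReal hp.le]
  exact hg.2 y'

lemma eLpNorm'_le_lpwNorm (g : Ω → X) {y' : Y →L[ℝ] ℝ} (hy' : ‖y'‖ ≤ 1) :
    eLpNorm' g p (scalarVar ν y') ≤ lpwNorm ν p g :=
  le_iSup₂ (f := fun y' (_ : y' ∈ {y' : Y →L[ℝ] ℝ | ‖y'‖ ≤ 1}) => eLpNorm' g p (scalarVar ν y'))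
    y' hy'

lemma lpwNorm_le {g : Ω → X} {B : ℝ≥0∞}
    (h : ∀ y' : Y →L[ℝ] ℝ, ‖y'‖ ≤ 1 → eLpNorm' g p (scalarVar ν y') ≤ B) : lpwNorm ν p g ≤ B :=
  iSup₂_le h

lemma lpwNorm_sub_le (hp : 1 ≤ p) {g h : Ω → X} (hg : StronglyMeasurable g)
    (hh : StronglyMeasurable h) :
    lpwNorm ν p (fun ω => g ω - h ω) ≤ lpwNorm ν p g + lpwNorm ν p h := by
  refine lpwNorm_le fun y' hy' => ?_
  calc eLpNorm' (g - h) p (scalarVar ν y')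
      ≤ eLpNorm' g p (scalarVar ν y') + eLpNorm' h p (scalarVar ν y') := by
        simpa [sub_eq_add_neg, eLpNorm'_neg] using
          eLpNorm'_add_le hg.aestronglyMeasurable hh.neg.aestronglyMeasurable hp
    _ ≤ lpwNorm ν p g + lpwNorm ν p h :=
        add_le_add (eLpNorm'_le_lpwNorm g hy') (eLpNorm'_le_lpwNorm h hy')

lemma lintegral_norm_rpow_le_lpwNorm_rpow_mul (hp : 0 < p) (g : Ω → X) (y' : Y →L[ℝ] ℝ) :
    ∫⁻ ω, (‖g ω‖₊ : ℝ≥0∞) ^ p ∂scalarVar ν y' ≤ lpwNorm ν p g ^ p * ‖y'‖₊ := by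
  obtain ⟨u, hu, hyu⟩ : ∃ u : Y →L[ℝ] ℝ, ‖u‖ ≤ 1 ∧ y' = ‖y'‖ • u := by
    rcases eq_or_ne y' 0 with rfl | hy
    · exact ⟨0, by simp, by simp⟩
    · refine ⟨‖y'‖⁻¹ • y', ?_, by rw [smul_inv_smul₀ (norm_ne_zero_iff.2 hy)]⟩
      rw [norm_smul, norm_inv, norm_norm, inv_mul_cancel₀ (norm_ne_zero_iff.2 hy)]
  have hμ : scalarVar ν y' = ‖y'‖₊ • scalarVar ν u := by
    rw [← scalarVar_nnreal_smul, coe_nnnorm, ← hyu]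
  rw [hμ, lintegral_smul_measure, ENNReal.smul_def, smul_eq_mul, mul_comm]
  gcongr
  calc ∫⁻ ω, (‖g ω‖₊ : ℝ≥0∞) ^ p ∂scalarVar ν u = eLpNorm' g p (scalarVar ν u) ^ p :=
        lintegral_rpow_enorm_eq_rpow_eLpNorm' (f := g) hp
    _ ≤ lpwNorm ν p g ^ p := by gcongr; exact eLpNorm'_le_lpwNorm g hu

lemma ofReal_integral_norm_rpow {μ : Measure Ω} {g : Ω → X} (hp : 0 ≤ p)
    (hg : Integrable (fun ω => ‖g ω‖ ^ p) μ) :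
    ENNReal.ofReal (∫ ω, ‖g ω‖ ^ p ∂μ) = ∫⁻ ω, (‖g ω‖₊ : ℝ≥0∞) ^ p ∂μ := by
  rw [ofReal_integral_eq_lintegral_ofReal hg (ae_of_all _ fun ω => by positivity)]
  congr with ω
  rw [← ENNReal.ofReal_rpow_of_nonneg (norm_nonneg _) hp, ofReal_norm, enorm_eq_nnnorm]

lemma integral_norm_rpow_le_lpwNorm_rpow_mul (hp : 0 < p) {g : Ω → X} (hg : lpwNorm ν p g ≠ ∞)
    {y' : Y →L[ℝ] ℝ} (hint : Integrable (fun ω => ‖g ω‖ ^ p) (scalarVar ν y')) :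
    ∫ ω, ‖g ω‖ ^ p ∂scalarVar ν y' ≤ (lpwNorm ν p g ^ p).toReal * ‖y'‖ := by
  rw [← ENNReal.ofReal_le_ofReal_iff (by positivity), ofReal_integral_norm_rpow hp.le hint,
    ENNReal.ofReal_mul ENNReal.toReal_nonneg, ofReal_toReal (rpow_ne_top_of_nonneg hp.le hg),
    ofReal_norm, enorm_eq_nnnorm]
  exact lintegral_norm_rpow_le_lpwNorm_rpow_mul hp g y'

lemma NuIntegrable.exists_integral_le {h : Ω → ℝ} (hh : NuIntegrable ν h) :
    ∃ C, ∀ y' : Y →L[ℝ] ℝ, ∫ ω, h ω ∂scalarVar ν y' ≤ C * ‖y'‖ := by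
  choose I hI using hh.2
  -- as functionals on `Y'`, the values `∫_E h dν` are pointwise, hence uniformly, bounded
  obtain ⟨C, hC⟩ := banach_steinhaus
    (g := fun E : {E : Set Ω // MeasurableSet E} =>
      NormedSpace.inclusionInDoubleDual ℝ Y (I E.1 E.2))
    fun y' => ⟨∫ ω, |h ω| ∂scalarVar ν y', fun E => by
      rw [NormedSpace.dual_def, Real.norm_eq_abs, hI]
      exact abs_signedIntegral_le _ _ (hh.1 y')⟩
  have hbound : ∀ E hE (y' : Y →L[ℝ] ℝ), |y' (I E hE)| ≤ C * ‖y'‖ := fun E hE y' =>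
    ((NormedSpace.inclusionInDoubleDual ℝ Y (I E hE)).le_opNorm y').trans
      (mul_le_mul_of_nonneg_right (hC ⟨E, hE⟩) (norm_nonneg _))
  refine ⟨2 * C, fun y' => ?_⟩
  obtain ⟨E₁, E₂, hE₁, hE₂, heq⟩ := exists_integral_totalVariation_eq (scalarSigned ν y') (hh.1 y')
  rw [scalarVar_eq_totalVariation, heq, ← hI E₁ hE₁, ← hI E₂ hE₂]
  linarith [abs_le.1 (hbound E₁ hE₁ y'), abs_le.1 (hbound E₂ hE₂ y')]

lemma NuIntegrable.lpwNorm_ne_top (hp : 0 < p) {g : Ω → X}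
    (hg : NuIntegrable ν fun ω => ‖g ω‖ ^ p) : lpwNorm ν p g ≠ ∞ := by
  obtain ⟨C, hC⟩ := hg.exists_integral_le
  refine ne_top_of_le_ne_top (rpow_ne_top_of_nonneg (by positivity) ofReal_ne_top :
    ENNReal.ofReal |C| ^ (1 / p) ≠ ∞) (lpwNorm_le fun y' hy' => ?_)
  rw [eLpNorm']
  gcongr
  refine (ofReal_integral_norm_rpow hp.le (hg.1 y')).symm.trans_le
    (ENNReal.ofReal_le_ofReal ((hC y').trans ?_))
  calc C * ‖y'‖ ≤ |C| * ‖y'‖ := by gcongr; exact le_abs_self C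
    _ ≤ |C| := mul_le_of_le_one_right (abs_nonneg C) hy'

lemma eventually_abs_signedIntegral_norm_rpow_sub_le (hp : 0 < p) (A : Set Ω) {f : Ω → X}
    {F : ℕ → Ω → X} (hf : MemLpw ν p f) (hF : ∀ m, MemLpw ν p (F m))
    (hf_fin : lpwNorm ν p f ≠ ∞)
    (hconv : Tendsto (fun m => lpwNorm ν p (fun ω => F m ω - f ω)) atTop (𝓝 0))
    {ε : ℝ} (hε : 0 < ε) :
    ∀ᶠ m in atTop, ∀ y' : Y →L[ℝ] ℝ,
      |signedIntegral (scalarSigned ν y') A (fun ω => ‖F m ω‖ ^ p) -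
        signedIntegral (scalarSigned ν y') A (fun ω => ‖f ω‖ ^ p)| ≤ ε * ‖y'‖ := by
  set M := (lpwNorm ν p f ^ p).toReal
  have hM : 0 ≤ M := ENNReal.toReal_nonneg
  obtain ⟨C, hC₀, hC⟩ := Real.exists_abs_rpow_sub_rpow_le hp.le
    (by positivity : 0 < ε / 2 / (M + 1))
  have hD : Tendsto (fun m => C * (lpwNorm ν p (fun ω => F m ω - f ω) ^ p).toReal) atTop
      (𝓝 (C * ((0 : ℝ≥0∞) ^ p).toReal)) :=
    ((ENNReal.tendsto_toReal (by simp [hp])).comp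
      ((ENNReal.continuous_rpow_const.tendsto 0).comp hconv)).const_mul C
  rw [ENNReal.zero_rpow_of_pos hp, ENNReal.toReal_zero, mul_zero] at hD
  filter_upwards [hconv.eventually (gt_mem_nhds ENNReal.zero_lt_top),
    hD.eventually (gt_mem_nhds (half_pos hε))] with m hm_fin hm_small y'
  have hfm := hf.memLp hp y'
  have hFm := (hF m).memLp hp y'
  have hf_bound := integral_norm_rpow_le_lpwNorm_rpow_mul hp hf_fin
    (hfm.integrable_norm_rpow_ofReal hp)
  have hd_bound := integral_norm_rpow_le_lpwNorm_rpow_mul hp hm_fin.ne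
    ((hFm.sub hfm).integrable_norm_rpow_ofReal hp)
  refine (abs_signedIntegral_norm_rpow_sub_le _ A hp hC₀ hC hFm hfm).trans ?_
  have hεM : ε / 2 / (M + 1) * M ≤ ε / 2 := by
    rw [div_mul_eq_mul_div, div_le_iff₀ (by positivity)]; nlinarith
  calc ε / 2 / (M + 1) * ∫ ω, ‖f ω‖ ^ p ∂scalarVar ν y' +
        C * ∫ ω, ‖F m ω - f ω‖ ^ p ∂scalarVar ν y'
      ≤ ε / 2 / (M + 1) * (M * ‖y'‖) +
          C * ((lpwNorm ν p (fun ω => F m ω - f ω) ^ p).toReal * ‖y'‖) := by gcongr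
    _ ≤ ε / 2 * ‖y'‖ + ε / 2 * ‖y'‖ := by
        rw [← mul_assoc, ← mul_assoc]; gcongr
    _ = ε * ‖y'‖ := by ring

end LpWeak

variable [MeasurableSpace Ω] [NormedAddCommGroup X] [CompleteSpace X]
  [NormedAddCommGroup Y] [NormedSpace ℝ Y] [CompleteSpace Y]

theorem lp_closed_in_lpw (ν : VectorMeasure Ω Y) (p : ℝ) (hp : 1 ≤ p)
    (f : Ω → X) (hf : MemLpw ν p f) (F : ℕ → Ω → X) (hF : ∀ m, MemLpw ν p (F m))
    (hFi : ∀ m, NuIntegrable ν (fun ω => ‖F m ω‖ ^ p))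
    (hconv : Filter.Tendsto (fun m => lpwNorm ν p (fun ω => F m ω - f ω))
      Filter.atTop (nhds 0)) :
    NuIntegrable ν (fun ω => ‖f ω‖ ^ p) := by
  have hp₀ : 0 < p := by linarith
  refine ⟨fun y' => (hf.memLp hp₀ y').integrable_norm_rpow_ofReal hp₀, fun E hE => ?_⟩
  obtain ⟨m₀, hm₀⟩ := (hconv.eventually (gt_mem_nhds ENNReal.zero_lt_top)).exists
  have hf_fin : lpwNorm ν p f ≠ ∞ := by
    refine ne_top_of_le_ne_top (add_ne_top.2 ⟨(hFi m₀).lpwNorm_ne_top hp₀, hm₀.ne⟩) ?_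
    calc lpwNorm ν p f = lpwNorm ν p (fun ω => F m₀ ω - (F m₀ ω - f ω)) := by simp
      _ ≤ _ := lpwNorm_sub_le hp (hF m₀).1 ((hF m₀).1.sub hf.1)
  choose I hI using fun m => (hFi m).2 E hE
  refine exists_forall_apply_eq_of_uniform_approx I _ fun ε hε => ?_
  filter_upwards [eventually_abs_signedIntegral_norm_rpow_sub_le hp₀ E hf hF hf_fin hconv hε]
    with m hm y'
  rw [hI]
  exact hm y'
end

section
/- For 1 ≤ p < ∞, the space L^p_w(ν, X, Y), equipped with the norm ‖f‖ = sup_{‖y'‖≤1}(∫_Ω ‖f‖ᵖ d|y'∘ν|)^{1/p}, is a Banach space (complete normed space). -/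
open MeasureTheory ENNReal

variable {Ω X Y : Type*}

/-!
A sequence that is Cauchy for `sup_{‖y'‖ ≤ 1} ‖·‖_{L^p(|y' ∘ ν|)}` has a subsequence that is
geometrically fast Cauchy in every `L^p(|y' ∘ ν|)` at once, hence converges `|y' ∘ ν|`-a.e. for
every `y'`. Its pointwise limit, taken wherever it exists, is strongly measurable and does not
depend on `y'`; Fatou's lemma, applied for each `y'` separately, then bounds the distance to this
limit uniformly in `y'`. Finiteness for `‖y'‖ > 1` follows from `|c • y' ∘ ν| = c • |y' ∘ ν|`.
-/

open Filter Topology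

theorem MeasureTheory.SignedMeasure.totalVariation_smul_of_nonneg {α : Type*} [MeasurableSpace α]
    (s : SignedMeasure α) {c : ℝ} (hc : 0 ≤ c) :
    (c • s).totalVariation = c.toNNReal • s.totalVariation := by
  unfold SignedMeasure.totalVariation
  rw [SignedMeasure.toJordanDecomposition_smul_real,
    JordanDecomposition.real_smul_posPart_nonneg _ _ hc,
    JordanDecomposition.real_smul_negPart_nonneg _ _ hc, smul_add]

theorem exists_strictMono_forall_lt_of_cauchy {d : ℕ → ℕ → ℝ≥0∞}
    (hd : ∀ ε > 0, ∃ N, ∀ m ≥ N, ∀ n ≥ N, d m n < ε) {B : ℕ → ℝ≥0∞} (hB : ∀ N, 0 < B N) :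
    ∃ φ : ℕ → ℕ, StrictMono φ ∧ ∀ N m n, N ≤ m → N ≤ n → d (φ m) (φ n) < B N := by
  obtain ⟨φ, hφ, hφd⟩ := extraction_forall_of_eventually'
    (P := fun N k => ∀ m ≥ k, ∀ n ≥ k, d m n < B N) fun N => by
      obtain ⟨K, hK⟩ := hd (B N) (hB N)
      exact ⟨K, fun k hk m hm n hn => hK m (hk.trans hm) n (hk.trans hn)⟩
  exact ⟨φ, hφ, fun N m n hm hn => hφd N _ (hφ.monotone hm) _ (hφ.monotone hn)⟩

section UniformLp

variable {α E ι : Type*} [MeasurableSpace α] [NormedAddCommGroup E] {q : ℝ≥0∞}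

theorem eLpNorm_le_of_ae_tendsto {μ : Measure α} {g : ℕ → α → E} {g_lim : α → E}
    (hg : ∀ k, AEStronglyMeasurable (g k) μ)
    (hlim : ∀ᵐ x ∂μ, Tendsto (fun k => g k x) atTop (𝓝 (g_lim x))) {ε : ℝ≥0∞}
    (hε : ∀ᶠ k in atTop, eLpNorm (g k) q μ ≤ ε) :
    eLpNorm g_lim q μ ≤ ε :=
  (Lp.eLpNorm_lim_le_liminf_eLpNorm hg g_lim hlim).trans
    (liminf_le_of_frequently_le' hε.frequently)

theorem exists_tendsto_iSup_eLpNorm_of_cauchy [CompleteSpace E] (μ : ι → Measure α)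
    (hq : 1 ≤ q) {F : ℕ → α → E} (hF : ∀ n, StronglyMeasurable (F n))
    (hcau : ∀ ε > 0, ∃ N, ∀ m ≥ N, ∀ n ≥ N, ⨆ i, eLpNorm (F m - F n) q (μ i) < ε) :
    ∃ f : α → E, StronglyMeasurable f ∧
      Tendsto (fun n => ⨆ i, eLpNorm (F n - f) q (μ i)) atTop (𝓝 0) := by
  obtain ⟨φ, hφ, hφ_cau⟩ :=
    exists_strictMono_forall_lt_of_cauchy hcau (B := fun N => 2⁻¹ ^ N)
      fun N => ENNReal.pow_pos (by norm_num) N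
  have hφ_ae (i : ι) : ∀ᵐ x ∂μ i, ∃ l, Tendsto (fun k => F (φ k) x) atTop (𝓝 l) :=
    Lp.ae_tendsto_of_cauchy_eLpNorm (fun k => (hF (φ k)).aestronglyMeasurable) hq
      (by simp [ENNReal.tsum_geometric])
      fun N m n hm hn => (le_iSup (fun i => eLpNorm _ q (μ i)) i).trans_lt (hφ_cau N m n hm hn)
  set f : α → E := fun x => limUnder atTop fun k => F (φ k) x
  refine ⟨f, StronglyMeasurable.limUnder fun k => hF (φ k), ENNReal.tendsto_atTop_zero.2 ?_⟩
  intro ε hε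
  obtain ⟨N, hN⟩ := hcau ε hε
  refine ⟨N, fun n hn => iSup_le fun i => ?_⟩
  refine eLpNorm_le_of_ae_tendsto (g := fun k => F n - F (φ k))
    (fun k => ((hF n).sub (hF (φ k))).aestronglyMeasurable) ?_ ?_
  · filter_upwards [hφ_ae i] with x hx
    exact (tendsto_nhds_limUnder hx).const_sub (F n x)
  · filter_upwards [eventually_ge_atTop N] with k hk
    exact iSup_le_iff.1 (hN n hn _ (hk.trans (hφ.id_le k))).le i

end UniformLp

section Lpw

variable [MeasurableSpace Ω] [NormedAddCommGroup X] [NormedAddCommGroup Y] [NormedSpace ℝ Y]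

theorem scalarSigned_smul (ν : VectorMeasure Ω Y) (c : ℝ) (y' : Y →L[ℝ] ℝ) :
    scalarSigned ν (c • y') = c • scalarSigned ν y' := by
  ext E hE
  rfl

theorem scalarVar_smul_of_nonneg (ν : VectorMeasure Ω Y) {c : ℝ} (hc : 0 ≤ c)
    (y' : Y →L[ℝ] ℝ) : scalarVar ν (c • y') = c.toNNReal • scalarVar ν y' :=
  (congrArg SignedMeasure.totalVariation (scalarSigned_smul ν c y')).trans
    (SignedMeasure.totalVariation_smul_of_nonneg _ hc)

theorem scalarVar_eq_smul_normalize (ν : VectorMeasure Ω Y) (y' : Y →L[ℝ] ℝ) :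
    scalarVar ν y' = ‖y'‖.toNNReal • scalarVar ν (‖y'‖⁻¹ • y') := by
  rcases eq_or_ne y' 0 with rfl | hy'
  · simpa using scalarVar_smul_of_nonneg ν le_rfl (0 : Y →L[ℝ] ℝ)
  · rw [← scalarVar_smul_of_nonneg ν (norm_nonneg y'), smul_inv_smul₀ (norm_ne_zero_iff.2 hy')]

theorem lintegral_rpow_nnnorm_lt_top_iff_memLp {f : Ω → X} (hf : StronglyMeasurable f)
    {p : ℝ} (hp : 0 < p) (μ : Measure Ω) :
    ∫⁻ ω, (‖f ω‖₊ : ℝ≥0∞) ^ p ∂μ < ∞ ↔ MemLp f (ENNReal.ofReal p) μ := by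
  rw [MemLp, eLpNorm_lt_top_iff_lintegral_rpow_enorm_lt_top (by simpa using hp) ofReal_ne_top,
    toReal_ofReal hp.le]
  exact (and_iff_right hf.aestronglyMeasurable).symm

theorem memLpw_of_forall_norm_le_one {ν : VectorMeasure Ω Y} {p : ℝ} (hp : 0 < p) {f : Ω → X}
    (hf : StronglyMeasurable f)
    (hmem : ∀ y' : Y →L[ℝ] ℝ, ‖y'‖ ≤ 1 → MemLp f (ENNReal.ofReal p) (scalarVar ν y')) :
    MemLpw ν p f := by
  refine ⟨hf, fun y' => (lintegral_rpow_nnnorm_lt_top_iff_memLp hf hp _).2 ?_⟩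
  rw [scalarVar_eq_smul_normalize]
  refine (hmem _ ?_).smul_measure coe_ne_top
  rw [norm_smul, norm_inv, norm_norm]
  exact inv_mul_le_one_of_le₀ le_rfl (norm_nonneg _)

theorem lpwNorm_eq_iSup_eLpNorm (ν : VectorMeasure Ω Y) {p : ℝ} (hp : 0 < p) (f : Ω → X) :
    lpwNorm ν p f =
      ⨆ y' : {y' : Y →L[ℝ] ℝ // ‖y'‖ ≤ 1}, eLpNorm f (ENNReal.ofReal p) (scalarVar ν y') := by
  rw [lpwNorm, iSup_subtype']
  congr! with y'
  rw [eLpNorm_eq_lintegral_rpow_enorm_toReal (by simpa using hp) ofReal_ne_top,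
    toReal_ofReal hp.le]
  rfl

end Lpw

variable [MeasurableSpace Ω] [NormedAddCommGroup X] [CompleteSpace X]
  [NormedAddCommGroup Y] [NormedSpace ℝ Y] [CompleteSpace Y]

theorem lpw_complete_general (ν : VectorMeasure Ω Y) (p : ℝ) (hp : 1 ≤ p)
    (F : ℕ → Ω → X) (hF : ∀ n, MemLpw ν p (F n))
    (hcau : ∀ ε : ℝ≥0∞, 0 < ε → ∃ N, ∀ m ≥ N, ∀ n ≥ N,
      lpwNorm ν p (fun ω => F m ω - F n ω) < ε) :
    ∃ f : Ω → X, MemLpw ν p f ∧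
      Filter.Tendsto (fun n => lpwNorm ν p (fun ω => F n ω - f ω))
        Filter.atTop (nhds 0) := by
  have hp0 : 0 < p := zero_lt_one.trans_le hp
  have hq : 1 ≤ ENNReal.ofReal p := by simpa using hp
  simp_rw [lpwNorm_eq_iSup_eLpNorm ν hp0] at hcau ⊢
  obtain ⟨f, hf, hlim⟩ := exists_tendsto_iSup_eLpNorm_of_cauchy
    (fun y' : {y' : Y →L[ℝ] ℝ // ‖y'‖ ≤ 1} => scalarVar ν y') hq (fun n => (hF n).1) hcau
  refine ⟨f, memLpw_of_forall_norm_le_one hp0 hf fun y' hy' => ?_, hlim⟩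
  obtain ⟨N, hN⟩ := ENNReal.tendsto_atTop_zero.1 hlim 1 one_pos
  have hFN : MemLp (F N) (ENNReal.ofReal p) (scalarVar ν y') :=
    (lintegral_rpow_nnnorm_lt_top_iff_memLp (hF N).1 hp0 _).1 ((hF N).2 y')
  have hFN_sub : MemLp (F N - f) (ENNReal.ofReal p) (scalarVar ν y') :=
    ⟨((hF N).1.sub hf).aestronglyMeasurable,
      (iSup_le_iff.1 (hN N le_rfl) ⟨y', hy'⟩).trans_lt one_lt_top⟩
  simpa using hFN.sub hFN_sub

theorem lpw_complete (ν : VectorMeasure Ω Y) (p : ℝ) (hp : 1 ≤ p)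
    (hfin : semivar ν Set.univ < ∞) (F : ℕ → Ω → X) (hF : ∀ n, MemLpw ν p (F n))
    (hcau : ∀ ε : ℝ≥0∞, 0 < ε → ∃ N, ∀ m ≥ N, ∀ n ≥ N,
      lpwNorm ν p (fun ω => F m ω - F n ω) < ε) :
    ∃ f : Ω → X, MemLpw ν p f ∧
      Filter.Tendsto (fun n => lpwNorm ν p (fun ω => F n ω - f ω))
        Filter.atTop (nhds 0) :=
  lpw_complete_general ν p hp F hF hcau
end

section
/- Let Y be a Banach space with the B-P property (containing no copy of c₀) and ν : 𝒜 → Y a σ-additive vector measure. Then for 1 ≤ p < ∞, L^p(ν, X, Y) = L^p_w(ν, X, Y): every strongly ν-measurable f : Ω → X with ∫_Ω ‖f‖ᵖ d|y'∘ν| < ∞ for all y' ∈ Y' has ‖f‖ᵖ ν-integrable. -/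
/-!
Expand `h = ‖f‖ ^ p` as `∑ cᵢ 1_{Bᵢ}` with `cᵢ ≥ 0` and measurable `Bᵢ`. For each `y'`, monotone
convergence on the two Jordan parts of `y' ∘ ν` shows that `∑ cᵢ (y' ∘ ν)(Bᵢ ∩ E)` converges
absolutely to `∫_E h d(y' ∘ ν)`. Thus `∑ cᵢ ν(Bᵢ ∩ E)` is weakly absolutely summable in `Y`, and
by the Bessaga–Pełczyński theorem it converges when `Y` contains no copy of `c₀`; its sum is
`∫_E h dν`.

Bessaga–Pełczyński: if a weakly absolutely summable series does not converge, it has disjoint blocks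
`y_j` of norm `≥ ε`, which are again weakly absolutely summable, hence uniformly so by
Banach–Steinhaus. Rosenthal's lemma, applied to `|g_j (y_k)|` for norming functionals `g_j`, yields
a subsequence with small off-diagonal mass, along which `a ↦ ∑ aₖ yₖ` embeds `c₀` isomorphically.
-/

open MeasureTheory ENNReal

variable {Ω X Y : Type*}

open Filter Topology Function ZeroAtInfty

section Rosenthal

lemma sum_le_tsum_nat_add {v : ℕ → ℝ} (hv : ∀ i, 0 ≤ v i) (hsv : Summable v) {K : ℕ}
    {n : ℕ → ℕ} {t : Finset ℕ} (hn : Set.InjOn n t) (hK : ∀ k ∈ t, K ≤ n k) :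
    ∑ k ∈ t, v (n k) ≤ ∑' i, v (i + K) := by
  classical
  have hinj : Set.InjOn (fun k => n k - K) t := fun k hk l hl hkl =>
    hn hk hl (by have := hK k hk; have := hK l hl; simp only at hkl; omega)
  calc ∑ k ∈ t, v (n k) = ∑ i ∈ t.image (fun k => n k - K), v (i + K) := by
        rw [Finset.sum_image hinj]
        exact Finset.sum_congr rfl fun k hk => by rw [Nat.sub_add_cancel (hK k hk)]
    _ ≤ ∑' i, v (i + K) :=
        ((summable_nat_add_iff K).2 hsv).sum_le_tsum _ fun i _ => hv _

lemma exists_strictMono_tendsto_of_sum_le {a : ℕ → ℕ → ℝ} {B : ℝ} (ha : ∀ j k, 0 ≤ a j k)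
    (hrow : ∀ j (s : Finset ℕ), ∑ k ∈ s, a j k ≤ B) :
    ∃ φ : ℕ → ℕ, StrictMono φ ∧ ∃ c : ℕ → ℝ, (∀ k, 0 ≤ c k) ∧ Summable c ∧
      ∀ k, Tendsto (fun j => a (φ j) k) atTop (𝓝 (c k)) := by
  have hmem : ∀ j, a j ∈ Set.univ.pi fun _ => Set.Icc 0 B :=
    fun j k _ => ⟨ha j k, by simpa using hrow j {k}⟩
  obtain ⟨c, hc, φ, hφ, hlim⟩ :=
    (isCompact_univ_pi fun _ => isCompact_Icc).isSeqCompact hmem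
  have hlim : ∀ k, Tendsto (fun j => a (φ j) k) atTop (𝓝 (c k)) := tendsto_pi_nhds.1 hlim
  have hc0 : ∀ k, 0 ≤ c k := fun k => (hc k (Set.mem_univ k)).1
  refine ⟨φ, hφ, c, hc0, summable_of_sum_range_le (c := B) hc0 fun n => ?_, hlim⟩
  exact le_of_tendsto (tendsto_finsetSum _ fun k _ => hlim k)
    (Eventually.of_forall fun j => hrow (φ j) _)

lemma exists_strictMono_tail_le_and_abs_sub_le {a : ℕ → ℕ → ℝ} {c : ℕ → ℝ}
    (hlim : ∀ k, Tendsto (fun j => a j k) atTop (𝓝 (c k))) (K : ℕ) {ε : ℝ} (hε : 0 < ε) :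
    ∃ n : ℕ → ℕ, StrictMono n ∧ (∀ k, K ≤ n k) ∧
      (∀ j, ∑' i, a (n j) (i + n (j + 1)) ≤ ε) ∧
      ∀ j k, k < j → |a (n j) (n k) - c (n k)| ≤ ε / 2 / 2 ^ n k := by
  let r : ℕ → ℕ → Prop := fun x y =>
    x < y ∧ ∑' i, a x (i + y) ≤ ε ∧ |a y x - c x| ≤ ε / 2 / 2 ^ x
  have hr : ∀ x, ∀ᶠ y in atTop, r x y := fun x =>
    (eventually_gt_atTop x).and <|
      ((tendsto_sum_nat_add (a x)).eventually_le_const hε).and <| by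
        simpa only [Real.dist_eq] using
          (Metric.tendsto_nhds.1 (hlim x) _ (by positivity)).mono fun y hy => hy.le
  obtain ⟨n, hnK, hn⟩ := exists_seq_of_forall_finset_exists (K ≤ ·) r fun s _ => by
    obtain ⟨y, hy, hKy⟩ := ((s.eventually_all.2 fun x _ => hr x).and (eventually_ge_atTop K)).exists
    exact ⟨y, hKy, hy⟩
  exact ⟨n, strictMono_nat_of_lt_succ fun j => (hn j _ j.lt_succ_self).1, hnK,
    fun j => (hn j _ j.lt_succ_self).2.1, fun j k hkj => (hn k j hkj).2.2⟩

lemma exists_strictMono_sum_erase_le_of_tendsto {a : ℕ → ℕ → ℝ} {c : ℕ → ℝ}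
    (ha : ∀ j k, 0 ≤ a j k) (hrow : ∀ j, Summable (a j)) (hc : ∀ k, 0 ≤ c k) (hcs : Summable c)
    (hlim : ∀ k, Tendsto (fun j => a j k) atTop (𝓝 (c k))) {ε : ℝ} (hε : 0 < ε) :
    ∃ n : ℕ → ℕ, StrictMono n ∧ ∀ j (s : Finset ℕ), ∑ k ∈ s.erase j, a (n j) (n k) ≤ ε := by
  obtain ⟨K, hK⟩ := ((tendsto_sum_nat_add c).eventually_le_const (by positivity : 0 < ε / 4)).exists
  obtain ⟨n, hn, hnK, htail, hclose⟩ :=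
    exists_strictMono_tail_le_and_abs_sub_le hlim K (by positivity : 0 < ε / 4)
  refine ⟨n, hn, fun j s => ?_⟩
  rw [← Finset.sum_filter_add_sum_filter_not (s.erase j) (· < j)]
  have hbelow : ∑ k ∈ (s.erase j).filter (· < j), a (n j) (n k) ≤ ε / 4 + ε / 4 :=
    calc _ ≤ ∑ k ∈ (s.erase j).filter (· < j), (c (n k) + ε / 4 / 2 / 2 ^ n k) :=
          Finset.sum_le_sum fun k hk =>
            by linarith [(abs_le.1 (hclose j k (Finset.mem_filter.1 hk).2)).2]
      _ ≤ ε / 4 + ε / 4 := by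
        rw [Finset.sum_add_distrib]
        gcongr
        · exact (sum_le_tsum_nat_add hc hcs hn.injective.injOn fun k _ => hnK k).trans hK
        · simpa [tsum_geometric_two'] using sum_le_tsum_nat_add (K := 0)
            (fun i => by positivity) (summable_geometric_two' (ε / 4)) hn.injective.injOn
            fun k _ => Nat.zero_le _
  have habove : ∑ k ∈ (s.erase j).filter (¬ · < j), a (n j) (n k) ≤ ε / 4 := by
    refine (sum_le_tsum_nat_add (ha _) (hrow _) hn.injective.injOn fun k hk => ?_).trans (htail j)
    obtain ⟨hk, hkj⟩ := Finset.mem_filter.1 hk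
    exact hn.monotone (by have := Finset.ne_of_mem_erase hk; omega)
  linarith

/-- Rosenthal's disjointification lemma. -/
theorem exists_strictMono_sum_erase_le {a : ℕ → ℕ → ℝ} {B ε : ℝ} (ha : ∀ j k, 0 ≤ a j k)
    (hrow : ∀ j (s : Finset ℕ), ∑ k ∈ s, a j k ≤ B) (hε : 0 < ε) :
    ∃ m : ℕ → ℕ, StrictMono m ∧ ∀ j (s : Finset ℕ), ∑ k ∈ s.erase j, a (m j) (m k) ≤ ε := by
  obtain ⟨φ, hφ, c, hc, hcs, hlim⟩ := exists_strictMono_tendsto_of_sum_le ha hrow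
  obtain ⟨n, hn, hsmall⟩ := exists_strictMono_sum_erase_le_of_tendsto
    (a := fun j k => a (φ j) (φ k)) (fun j k => ha _ _)
    (fun j => (summable_of_sum_range_le (ha _) fun _ => hrow _ _).comp_injective hφ.injective)
    (fun k => hc _) (hcs.comp_injective hφ.injective) (fun k => hlim (φ k)) hε
  exact ⟨φ ∘ n, hφ.comp hn, hsmall⟩

end Rosenthal

namespace ZeroAtInftyContinuousMap

lemma abs_apply_le_norm (a : C₀(ℕ, ℝ)) (k : ℕ) : |a k| ≤ ‖a‖ := by
  have := a.toBCF.norm_coe_le_norm k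
  rwa [norm_toBCF_eq_norm] at this

lemma exists_norm_le_two_mul_abs_apply (a : C₀(ℕ, ℝ)) : ∃ j, ‖a‖ ≤ 2 * |a j| := by
  by_contra! h
  have hle : ‖a.toBCF‖ ≤ ‖a‖ / 2 := by
    refine (BoundedContinuousFunction.norm_le (by positivity)).2 fun k => ?_
    change |a k| ≤ _
    linarith [h k]
  rw [norm_toBCF_eq_norm] at hle
  linarith [h 0, abs_nonneg (a 0)]

lemma tendsto_cofinite (a : C₀(ℕ, ℝ)) : Tendsto a cofinite (𝓝 0) :=
  cocompact_eq_cofinite ℕ ▸ zero_at_infty a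

end ZeroAtInftyContinuousMap

section BessagaPelczynski

variable [NormedAddCommGroup Y]

lemma exists_pairwiseDisjoint_le_norm_sum_of_not_summable [CompleteSpace Y] {ι : Type*}
    {x : ι → Y} (hx : ¬ Summable x) :
    ∃ ε > 0, ∃ T : ℕ → Finset ι, Pairwise (Disjoint on T) ∧ ∀ j, ε ≤ ‖∑ i ∈ T j, x i‖ := by
  classical
  simp only [summable_iff_vanishing_norm, not_forall, not_exists, not_lt] at hx
  obtain ⟨ε, hε, hbig⟩ := hx
  obtain ⟨T, hT, hdisj⟩ := exists_seq_of_forall_finset_exists'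
    (fun t : Finset ι => ε ≤ ‖∑ i ∈ t, x i‖) Disjoint fun S _ => by
      obtain ⟨t, hts, ht⟩ := hbig (S.sup id)
      exact ⟨t, ht, fun u hu => (hts.mono_right (Finset.le_sup (f := id) hu)).symm⟩
  exact ⟨ε, hε, T, hdisj, hT⟩

variable [NormedSpace ℝ Y]

def ContainsC0 (Y : Type*) [NormedAddCommGroup Y] [NormedSpace ℝ Y] : Prop :=
  ∃ e : C₀(ℕ, ℝ) →L[ℝ] Y, ∃ c : ℝ, 0 < c ∧ ∀ x, c * ‖x‖ ≤ ‖e x‖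

lemma abs_sign_mul_le (t u : ℝ) : |(SignType.sign t : ℝ) * u| ≤ |u| := by
  rw [abs_mul]
  rcases SignType.sign t with _ | _ | _ <;> simp

/-- Banach–Steinhaus for the evaluations at the signed partial sums `∑ j ∈ s, ±y j`. -/
lemma exists_sum_abs_dual_le_mul_norm {ι : Type*} {y : ι → Y}
    (hy : ∀ y' : Y →L[ℝ] ℝ, Summable fun j => |y' (y j)|) :
    ∃ B, 0 ≤ B ∧ ∀ (y' : Y →L[ℝ] ℝ) (s : Finset ι), ∑ j ∈ s, |y' (y j)| ≤ B * ‖y'‖ := by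
  let g : Finset ι × (Y →L[ℝ] ℝ) → (Y →L[ℝ] ℝ) →L[ℝ] ℝ := fun k =>
    ContinuousLinearMap.apply ℝ ℝ (∑ j ∈ k.1, (SignType.sign (k.2 (y j)) : ℝ) • y j)
  have hg : ∀ k y', g k y' = ∑ j ∈ k.1, (SignType.sign (k.2 (y j)) : ℝ) * y' (y j) := by
    intro k y'
    simp [g]
  obtain ⟨C, hC⟩ := banach_steinhaus (g := g) fun y' => ⟨∑' j, |y' (y j)|, fun k => by
    rw [Real.norm_eq_abs, hg]
    calc _ ≤ ∑ j ∈ k.1, |(SignType.sign (k.2 (y j)) : ℝ) * y' (y j)| :=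
          Finset.abs_sum_le_sum_abs _ _
      _ ≤ ∑ j ∈ k.1, |y' (y j)| := Finset.sum_le_sum fun j _ => abs_sign_mul_le _ _
      _ ≤ ∑' j, |y' (y j)| := (hy y').sum_le_tsum _ fun j _ => abs_nonneg _⟩
  refine ⟨max C 0, le_max_right _ _, fun y' s => ?_⟩
  calc ∑ j ∈ s, |y' (y j)| = g (s, y') y' := by simp only [hg, sign_mul_self]
    _ ≤ ‖g (s, y')‖ * ‖y'‖ := (le_abs_self _).trans ((g (s, y')).le_opNorm y')
    _ ≤ max C 0 * ‖y'‖ := by gcongr; exact (hC _).trans (le_max_left _ _)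

lemma summable_abs_dual_sum_of_pairwiseDisjoint {ι : Type*} {x : ι → Y}
    (hx : ∀ y' : Y →L[ℝ] ℝ, Summable fun i => |y' (x i)|) {T : ℕ → Finset ι}
    (hT : Pairwise (Disjoint on T)) (y' : Y →L[ℝ] ℝ) :
    Summable fun j => |y' (∑ i ∈ T j, x i)| := by
  classical
  refine Summable.of_nonneg_of_le (fun j => abs_nonneg _)
    (fun j => (congrArg abs (map_sum y' x (T j))).le.trans (Finset.abs_sum_le_sum_abs _ _))
    (summable_of_sum_range_le (c := ∑' i, |y' (x i)|)
      (fun j => Finset.sum_nonneg fun i _ => abs_nonneg _) fun n => ?_)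
  rw [← Finset.sum_biUnion (hT.set_pairwise _)]
  exact (hx y').sum_le_tsum _ fun i _ => abs_nonneg _

section WeaklyAbsolutelySummable

variable {z : ℕ → Y} {B : ℝ}

lemma norm_sum_smul_le (hB : ∀ (y' : Y →L[ℝ] ℝ) (s : Finset ℕ), ∑ k ∈ s, |y' (z k)| ≤ B * ‖y'‖)
    (hB0 : 0 ≤ B) {w : ℕ → ℝ} {M : ℝ} (hM : 0 ≤ M) {t : Finset ℕ} (hw : ∀ k ∈ t, |w k| ≤ M) :
    ‖∑ k ∈ t, w k • z k‖ ≤ M * B := by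
  refine NormedSpace.norm_le_dual_bound ℝ _ (mul_nonneg hM hB0) fun y' => ?_
  simp only [map_sum, map_smul, smul_eq_mul, Real.norm_eq_abs]
  calc |∑ k ∈ t, w k * y' (z k)| ≤ ∑ k ∈ t, M * |y' (z k)| :=
        (Finset.abs_sum_le_sum_abs _ _).trans <| Finset.sum_le_sum fun k hk => by
          rw [abs_mul]; exact mul_le_mul_of_nonneg_right (hw k hk) (abs_nonneg _)
    _ ≤ M * (B * ‖y'‖) := by rw [← Finset.mul_sum]; exact mul_le_mul_of_nonneg_left (hB y' t) hM
    _ = M * B * ‖y'‖ := by ring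

lemma summable_smul_of_tendsto_zero [CompleteSpace Y]
    (hB : ∀ (y' : Y →L[ℝ] ℝ) (s : Finset ℕ), ∑ k ∈ s, |y' (z k)| ≤ B * ‖y'‖) (hB0 : 0 ≤ B)
    {a : ℕ → ℝ} (ha : Tendsto a cofinite (𝓝 0)) : Summable fun k => a k • z k := by
  refine summable_iff_vanishing_norm.2 fun ε hε => ?_
  have hM : 0 < ε / (B + 1) := by positivity
  have hfin : {k | ε / (B + 1) ≤ |a k|}.Finite := by
    simpa [Real.dist_eq] using (Metric.tendsto_nhds.1 ha _ hM)
  refine ⟨hfin.toFinset, fun t ht => ?_⟩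
  calc ‖∑ k ∈ t, a k • z k‖ ≤ ε / (B + 1) * B :=
        norm_sum_smul_le hB hB0 hM.le fun k hk => (not_le.1 fun hk' =>
          Finset.disjoint_left.1 ht hk (hfin.mem_toFinset.2 hk')).le
    _ < ε := by rw [div_mul_eq_mul_div, div_lt_iff₀ (by positivity)]; nlinarith

lemma exists_clm_hasSum_smul [CompleteSpace Y]
    (hB : ∀ (y' : Y →L[ℝ] ℝ) (s : Finset ℕ), ∑ k ∈ s, |y' (z k)| ≤ B * ‖y'‖) (hB0 : 0 ≤ B) :
    ∃ T : C₀(ℕ, ℝ) →L[ℝ] Y, ∀ a, HasSum (fun k => a k • z k) (T a) := by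
  have hsum := fun a : C₀(ℕ, ℝ) => summable_smul_of_tendsto_zero hB hB0 a.tendsto_cofinite
  let T₀ : C₀(ℕ, ℝ) →ₗ[ℝ] Y :=
    { toFun := fun a => ∑' k, a k • z k
      map_add' := fun a b => by simpa [add_smul] using (hsum a).tsum_add (hsum b)
      map_smul' := fun r a => by simpa [smul_smul] using ((hsum a).hasSum.const_smul r).tsum_eq }
  refine ⟨T₀.mkContinuous B fun a => ?_, fun a => (hsum a).hasSum⟩
  rw [mul_comm]
  exact le_of_tendsto' (hsum a).hasSum.norm fun t =>
    norm_sum_smul_le hB hB0 (norm_nonneg a) fun k _ => a.abs_apply_le_norm k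

end WeaklyAbsolutelySummable

lemma sub_mul_le_norm_of_hasSum {z : ℕ → Y} {a : ℕ → ℝ} {y : Y} (hy : HasSum (fun k => a k • z k) y)
    {M η : ℝ} (ha : ∀ k, |a k| ≤ M) {g : Y →L[ℝ] ℝ} (hg : ‖g‖ ≤ 1) {j : ℕ} (hgz : g (z j) = ‖z j‖)
    (hsmall : ∀ s : Finset ℕ, ∑ k ∈ s.erase j, |g (z k)| ≤ η) :
    |a j| * ‖z j‖ - M * η ≤ ‖y‖ := by
  have hgy : HasSum (fun k => a k * g (z k)) (g y) := by simpa using hy.mapL g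
  have hM : 0 ≤ M := (abs_nonneg _).trans (ha 0)
  calc |a j| * ‖z j‖ - M * η ≤ |g y| := by
        refine ge_of_tendsto ((continuous_abs.tendsto _).comp hgy)
          ((eventually_ge_atTop {j}).mono fun s hs => ?_)
        rw [comp_apply, ← Finset.add_sum_erase s _ (Finset.singleton_subset_iff.1 hs), hgz]
        have hrest : |∑ k ∈ s.erase j, a k * g (z k)| ≤ M * η :=
          calc _ ≤ ∑ k ∈ s.erase j, M * |g (z k)| :=
                (Finset.abs_sum_le_sum_abs _ _).trans <| Finset.sum_le_sum fun k _ => by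
                  rw [abs_mul]; exact mul_le_mul_of_nonneg_right (ha k) (abs_nonneg _)
            _ ≤ M * η := by rw [← Finset.mul_sum]; exact mul_le_mul_of_nonneg_left (hsmall s) hM
        have := abs_add_le (a j * ‖z j‖ + ∑ k ∈ s.erase j, a k * g (z k))
          (-∑ k ∈ s.erase j, a k * g (z k))
        rw [abs_neg, add_neg_cancel_right, abs_mul, abs_norm] at this
        linarith
    _ ≤ ‖g‖ * ‖y‖ := g.le_opNorm y
    _ ≤ ‖y‖ := mul_le_of_le_one_left (norm_nonneg y) hg

lemma containsC0_of_summable_abs_dual [CompleteSpace Y] {z : ℕ → Y}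
    (hz : ∀ y' : Y →L[ℝ] ℝ, Summable fun k => |y' (z k)|) {δ : ℝ} (hδ : 0 < δ)
    (hzδ : ∀ k, δ ≤ ‖z k‖) {g : ℕ → Y →L[ℝ] ℝ} (hg : ∀ j, ‖g j‖ ≤ 1)
    (hgz : ∀ j, g j (z j) = ‖z j‖)
    (hsmall : ∀ j (s : Finset ℕ), ∑ k ∈ s.erase j, |g j (z k)| ≤ δ / 4) :
    ContainsC0 Y := by
  obtain ⟨B, hB0, hB⟩ := exists_sum_abs_dual_le_mul_norm hz
  obtain ⟨T, hT⟩ := exists_clm_hasSum_smul hB hB0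
  refine ⟨T, δ / 4, by positivity, fun a => ?_⟩
  obtain ⟨j, hj⟩ := a.exists_norm_le_two_mul_abs_apply
  have := sub_mul_le_norm_of_hasSum (hT a) a.abs_apply_le_norm (hg j) (hgz j) (hsmall j)
  nlinarith [mul_le_mul_of_nonneg_left (hzδ j) (abs_nonneg (a j))]

/-- Bessaga–Pełczyński. -/
theorem summable_of_summable_abs_dual [CompleteSpace Y] (hY : ¬ ContainsC0 Y) {ι : Type*}
    {x : ι → Y} (hx : ∀ y' : Y →L[ℝ] ℝ, Summable fun i => |y' (x i)|) : Summable x := by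
  by_contra hns
  obtain ⟨ε, hε, T, hT, hTε⟩ := exists_pairwiseDisjoint_le_norm_sum_of_not_summable hns
  set y : ℕ → Y := fun j => ∑ i ∈ T j, x i
  have hy := summable_abs_dual_sum_of_pairwiseDisjoint hx hT
  obtain ⟨B, -, hB⟩ := exists_sum_abs_dual_le_mul_norm hy
  choose g hg1 hgy using fun j =>
    exists_dual_vector ℝ (y j) (hε.trans_le (hTε j)).ne'
  obtain ⟨m, hm, hsmall⟩ := exists_strictMono_sum_erase_le (a := fun j k => |g j (y k)|)
    (fun _ _ => abs_nonneg _) (fun j s => (hB (g j) s).trans_eq (by rw [hg1, mul_one]))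
    (by positivity : 0 < ε / 4)
  exact hY <| containsC0_of_summable_abs_dual (z := y ∘ m)
    (fun y' => (hy y').comp_injective hm.injective) hε (fun k => hTε (m k))
    (fun j => (hg1 (m j)).le) (fun j => hgy (m j)) hsmall

end BessagaPelczynski

namespace GreedyExpansion

variable (h : Ω → ℝ)

/-- Greedy expansion of `h` in the harmonic weights `1 / (k + 1)`: the `k`-th digit is taken at
`ω` exactly when it does not overshoot `h ω`. -/
noncomputable def partialSum : ℕ → Ω → ℝ
  | 0 => 0
  | k + 1 => fun ω => partialSum k ω +
      {ω | partialSum k ω + 1 / ((k : ℝ) + 1) ≤ h ω}.indicator (fun _ => 1 / ((k : ℝ) + 1)) ω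

def digitSet (k : ℕ) : Set Ω := {ω | partialSum h k ω + 1 / ((k : ℝ) + 1) ≤ h ω}

variable {h}

lemma partialSum_succ (k : ℕ) (ω : Ω) :
    partialSum h (k + 1) ω =
      partialSum h k ω + (digitSet h k).indicator (fun _ => 1 / ((k : ℝ) + 1)) ω :=
  rfl

lemma partialSum_eq_sum (k : ℕ) (ω : Ω) :
    partialSum h k ω =
      ∑ i ∈ Finset.range k, (digitSet h i).indicator (fun _ => 1 / ((i : ℝ) + 1)) ω := by
  induction k with
  | zero => rfl
  | succ k ih => rw [partialSum_succ, ih, Finset.sum_range_succ]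

lemma monotone_partialSum (ω : Ω) : Monotone fun k => partialSum h k ω :=
  monotone_nat_of_le_succ fun k => by
    rw [partialSum_succ]
    exact le_add_of_nonneg_right (Set.indicator_nonneg (fun _ _ => by positivity) _)

lemma partialSum_le (h0 : ∀ ω, 0 ≤ h ω) (k : ℕ) (ω : Ω) : partialSum h k ω ≤ h ω := by
  induction k with
  | zero => exact h0 ω
  | succ k ih =>
    rw [partialSum_succ]
    by_cases hk : ω ∈ digitSet h k
    · rwa [Set.indicator_of_mem hk]
    · rwa [Set.indicator_of_notMem hk, add_zero]

lemma measurable_partialSum [MeasurableSpace Ω] (hm : Measurable h) (k : ℕ) :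
    Measurable (partialSum h k) := by
  induction k with
  | zero => exact measurable_const
  | succ k ih =>
    exact ih.add (measurable_const.indicator (measurableSet_le (ih.add_const _) hm))

lemma measurableSet_digitSet [MeasurableSpace Ω] (hm : Measurable h) (k : ℕ) :
    MeasurableSet (digitSet h k) :=
  measurableSet_le ((measurable_partialSum hm k).add_const _) hm

/-- If the partial sums stayed below `L < h ω`, every late digit would be taken and the harmonic
series would be bounded. -/
lemma tendsto_partialSum (h0 : ∀ ω, 0 ≤ h ω) (ω : Ω) :
    Tendsto (fun k => partialSum h k ω) atTop (𝓝 (h ω)) := by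
  have hbdd : BddAbove (Set.range fun k => partialSum h k ω) :=
    ⟨h ω, Set.forall_mem_range.2 fun k => partialSum_le h0 k ω⟩
  have hlim := tendsto_atTop_ciSup (monotone_partialSum ω) hbdd
  set L := ⨆ k, partialSum h k ω
  suffices hL : L = h ω from hL ▸ hlim
  refine (ciSup_le fun k => partialSum_le h0 k ω).antisymm (not_lt.1 fun hlt => ?_)
  obtain ⟨N, hN⟩ : ∃ N, ∀ k ≥ N, ω ∈ digitSet h k := by
    have hw : Tendsto (fun k : ℕ => 1 / ((k : ℝ) + 1)) atTop (𝓝 0) :=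
      tendsto_one_div_add_atTop_nhds_zero_nat
    obtain ⟨N, hN⟩ := eventually_atTop.1 (hw.eventually_le_const (sub_pos.2 hlt))
    refine ⟨N, fun k hk => ?_⟩
    change partialSum h k ω + 1 / ((k : ℝ) + 1) ≤ h ω
    linarith [hN k hk, le_ciSup hbdd k]
  have hsum : ∀ m, partialSum h N ω + ∑ i ∈ Finset.range m, 1 / ((N + i : ℕ) + 1 : ℝ) =
      partialSum h (N + m) ω := by
    intro m
    induction m with
    | zero => simp
    | succ m ih =>
      rw [Finset.sum_range_succ, ← add_assoc, ih, ← add_assoc N m 1, partialSum_succ,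
        Set.indicator_of_mem (hN (N + m) (Nat.le_add_right N m))]
  have hharm : Summable fun i : ℕ => 1 / ((N + i : ℕ) + 1 : ℝ) := by
    refine summable_of_sum_range_le (c := h ω) (fun i => by positivity) fun m => ?_
    have hN0 : 0 ≤ partialSum h N ω := monotone_partialSum ω (Nat.zero_le N)
    linarith [hsum m, partialSum_le h0 (N + m) ω]
  refine Real.not_summable_one_div_natCast ((summable_nat_add_iff (N + 1)).1 ?_)
  simpa [add_assoc, add_comm, add_left_comm] using hharm

end GreedyExpansion

theorem exists_hasSum_indicator [MeasurableSpace Ω] {h : Ω → ℝ} (hm : Measurable h)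
    (h0 : ∀ ω, 0 ≤ h ω) :
    ∃ (c : ℕ → ℝ) (B : ℕ → Set Ω), (∀ k, 0 ≤ c k) ∧ (∀ k, MeasurableSet (B k)) ∧
      ∀ ω, HasSum (fun k => (B k).indicator (fun _ => c k) ω) (h ω) := by
  refine ⟨fun k => 1 / ((k : ℝ) + 1), GreedyExpansion.digitSet h, fun k => by positivity,
    GreedyExpansion.measurableSet_digitSet hm, fun ω => ?_⟩
  refine (hasSum_iff_tendsto_nat_of_nonneg (fun k => Set.indicator_nonneg
    (fun _ _ => by positivity) _) _).2 ?_
  simpa only [← GreedyExpansion.partialSum_eq_sum] using GreedyExpansion.tendsto_partialSum h0 ω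

section IndicatorSeries

variable [MeasurableSpace Ω] {ι : Type*} [Countable ι] {h : Ω → ℝ} {c : ι → ℝ} {B : ι → Set Ω}

lemma tsum_ofReal_mul_measure_inter_eq_setLIntegral (hc : ∀ i, 0 ≤ c i)
    (hB : ∀ i, MeasurableSet (B i))
    (hh : ∀ ω, HasSum (fun i => (B i).indicator (fun _ => c i) ω) (h ω)) (μ : Measure Ω)
    (E : Set Ω) :
    ∑' i, ENNReal.ofReal (c i) * μ (B i ∩ E) = ∫⁻ ω in E, ENNReal.ofReal (h ω) ∂μ := by
  calc ∑' i, ENNReal.ofReal (c i) * μ (B i ∩ E)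
      = ∑' i, ∫⁻ ω in E, (B i).indicator (fun _ => ENNReal.ofReal (c i)) ω ∂μ := by
        simp only [lintegral_indicator_const (hB _), Measure.restrict_apply (hB _)]
    _ = ∫⁻ ω in E, ∑' i, (B i).indicator (fun _ => ENNReal.ofReal (c i)) ω ∂μ :=
        (lintegral_tsum fun i => (measurable_const.indicator (hB i)).aemeasurable).symm
    _ = ∫⁻ ω in E, ENNReal.ofReal (h ω) ∂μ := by
        refine lintegral_congr fun ω => ?_
        rw [← (hh ω).tsum_eq, ENNReal.ofReal_tsum_of_nonneg
          (fun i => Set.indicator_nonneg (fun _ _ => hc i) _) (hh ω).summable]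
        exact tsum_congr fun i => congrFun (Set.indicator_comp_of_zero ENNReal.ofReal_zero) ω

lemma hasSum_mul_measureReal_inter (hc : ∀ i, 0 ≤ c i) (hB : ∀ i, MeasurableSet (B i))
    (hh : ∀ ω, HasSum (fun i => (B i).indicator (fun _ => c i) ω) (h ω)) {μ : Measure Ω}
    {E : Set Ω} (hint : IntegrableOn h E μ) :
    HasSum (fun i => c i * μ.real (B i ∩ E)) (∫ ω in E, h ω ∂μ) := by
  have h0 : ∀ ω, 0 ≤ h ω := fun ω => (hh ω).nonneg fun i => Set.indicator_nonneg (fun _ _ => hc i) _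
  have hfin : ∑' i, ENNReal.ofReal (c i) * μ (B i ∩ E) ≠ ∞ := by
    rw [tsum_ofReal_mul_measure_inter_eq_setLIntegral hc hB hh]
    exact ((hasFiniteIntegral_iff_ofReal (ae_of_all _ h0)).1 hint.2).ne
  rw [integral_eq_lintegral_of_nonneg_ae (ae_of_all _ h0) hint.1,
    ← tsum_ofReal_mul_measure_inter_eq_setLIntegral hc hB hh,
    ENNReal.tsum_toReal_eq (ENNReal.ne_top_of_tsum_ne_top hfin)]
  simpa only [ENNReal.toReal_mul, ENNReal.toReal_ofReal (hc _), measureReal_def]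
    using ENNReal.hasSum_toReal hfin

lemma hasSum_mul_signedMeasure_inter (s : SignedMeasure Ω) (hc : ∀ i, 0 ≤ c i)
    (hB : ∀ i, MeasurableSet (B i))
    (hh : ∀ ω, HasSum (fun i => (B i).indicator (fun _ => c i) ω) (h ω)) {E : Set Ω}
    (hE : MeasurableSet E) (hint : Integrable h s.totalVariation) :
    HasSum (fun i => c i * s (B i ∩ E)) (signedIntegral s E h) := by
  have hpos := hasSum_mul_measureReal_inter hc hB hh
    (hint.mono_measure (Measure.le_add_right le_rfl)).integrableOn (E := E)
  have hneg := hasSum_mul_measureReal_inter hc hB hh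
    (hint.mono_measure (Measure.le_add_left le_rfl)).integrableOn (E := E)
  have hterm : ∀ i, c i * s (B i ∩ E) = c i * s.toJordanDecomposition.posPart.real (B i ∩ E) -
      c i * s.toJordanDecomposition.negPart.real (B i ∩ E) := fun i => by
    rw [s.apply_eq_posPart_real_sub_negPart_real ((hB i).inter hE), mul_sub]
  simp only [hterm]
  exact hpos.sub hneg

lemma summable_abs_mul_signedMeasure_inter (s : SignedMeasure Ω) (hc : ∀ i, 0 ≤ c i)
    (hB : ∀ i, MeasurableSet (B i))
    (hh : ∀ ω, HasSum (fun i => (B i).indicator (fun _ => c i) ω) (h ω)) (E : Set Ω)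
    (hint : Integrable h s.totalVariation) :
    Summable fun i => |c i * s (B i ∩ E)| :=
  (hasSum_mul_measureReal_inter hc hB hh hint.integrableOn).summable.of_nonneg_of_le
    (fun _ => abs_nonneg _) fun i => by
      rw [abs_mul, abs_of_nonneg (hc i)]
      exact mul_le_mul_of_nonneg_left (s.norm_le_totalVariation _) (hc i)

end IndicatorSeries

@[simp]
lemma scalarSigned_apply [MeasurableSpace Ω] [NormedAddCommGroup Y] [NormedSpace ℝ Y]
    (ν : VectorMeasure Ω Y) (y' : Y →L[ℝ] ℝ) (E : Set Ω) : scalarSigned ν y' E = y' (ν E) :=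
  rfl

variable [MeasurableSpace Ω] [NormedAddCommGroup X] [CompleteSpace X]
  [NormedAddCommGroup Y] [NormedSpace ℝ Y] [CompleteSpace Y]

theorem lp_eq_lpw_of_no_c0
    (hY : ¬ ∃ e : ZeroAtInftyContinuousMap ℕ ℝ →L[ℝ] Y, ∃ c : ℝ, 0 < c ∧ ∀ x, c * ‖x‖ ≤ ‖e x‖)
    (ν : VectorMeasure Ω Y) (p : ℝ) (hp : 1 ≤ p) (f : Ω → X) (hf : MemLpw ν p f) :
    NuIntegrable ν (fun ω => ‖f ω‖ ^ p) := by
  have hmeas : Measurable fun ω => ‖f ω‖ ^ p := hf.1.norm.measurable.pow_const p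
  have hint : ∀ y', Integrable (fun ω => ‖f ω‖ ^ p) (scalarVar ν y') := fun y' =>
    ⟨hmeas.aestronglyMeasurable, by
      rw [hasFiniteIntegral_iff_ofReal (ae_of_all _ fun ω => by positivity)]
      simpa only [← ENNReal.ofReal_rpow_of_nonneg (norm_nonneg _) (zero_le_one.trans hp),
        ofReal_norm, enorm_eq_nnnorm] using hf.2 y'⟩
  refine ⟨hint, fun E hE => ?_⟩
  obtain ⟨c, B, hc, hB, hh⟩ := exists_hasSum_indicator hmeas fun ω => by positivity
  have hx : Summable fun i => c i • ν (B i ∩ E) :=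
    summable_of_summable_abs_dual hY fun y' => by
      simpa using summable_abs_mul_signedMeasure_inter (scalarSigned ν y') hc hB hh E (hint y')
  refine ⟨∑' i, c i • ν (B i ∩ E), fun y' => ?_⟩
  rw [y'.map_tsum hx]
  simpa using (hasSum_mul_signedMeasure_inter (scalarSigned ν y') hc hB hh hE (hint y')).tsum_eq
end
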